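/- arXiv:1910.03918 — 11 statements merged into one kernel-verified Lean document; each statement's English description precedes it below -/
import Mathlib

section
/- Let γ, ε ∈ (0,1), let K ≥ 1 be an integer, and let μ : ℕ → ℝ be nonnegative with μ^C := Σ_{k=0}^{K-1} μ_k ≤ 1. Suppose the steady-state balance equations hold: (1 - γ·(1-ε)·μ^C)·μ_0 = 1 - γ, and (1 - γ·(1-ε)·μ^C)·μ_k = γ·(1-(1-ε)·μ^C)·μ_{k-1} for every 0 < k < K. Then, writing β = β(γ,ε,μ^C), one has μ_k = β^k·(1-β) for every k < K, and consequently μ^C = 1 - β^K. -/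
/-! The balance equations say `D μ₀ = 1 - γ` and `D μₖ = β D μₖ₋₁` with
`D = 1 - γ(1-ε)μ^C` and `β D = γ(1 - (1-ε)μ^C)`, so `(1 - β) D = 1 - γ`.
As `γ ≠ 1`, the first equation forces `D ≠ 0`; cancelling `D` gives `μ₀ = 1 - β`
and `μₖ = β μₖ₋₁`, and summing the resulting geometric sequence gives `μ^C`. -/

noncomputable def betaFn (γ ε μ : ℝ) : ℝ := γ * (1 - (1 - ε) * μ) / (1 - γ * (1 - ε) * μ)

lemma eq_pow_mul_of_succ_eq_mul {M : Type*} [Monoid M] {a : ℕ → M} {r : M} {K : ℕ}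
    (h : ∀ k, k + 1 < K → a (k + 1) = r * a k) : ∀ k < K, a k = r ^ k * a 0 := by
  intro k hk
  induction k with
  | zero => rw [pow_zero, one_mul]
  | succ k ih => rw [h k hk, ih (by omega), pow_succ', mul_assoc]

lemma sum_range_pow_mul_one_sub (β : ℝ) (K : ℕ) :
    ∑ k ∈ Finset.range K, β ^ k * (1 - β) = 1 - β ^ K := by
  rw [← Finset.sum_mul, geom_sum_mul_neg]

section betaFn

variable {γ ε μ : ℝ}

lemma betaFn_mul (h : 1 - γ * (1 - ε) * μ ≠ 0) :
    betaFn γ ε μ * (1 - γ * (1 - ε) * μ) = γ * (1 - (1 - ε) * μ) :=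
  div_mul_cancel₀ _ h

lemma one_sub_betaFn_mul (h : 1 - γ * (1 - ε) * μ ≠ 0) :
    (1 - betaFn γ ε μ) * (1 - γ * (1 - ε) * μ) = 1 - γ := by
  linear_combination -betaFn_mul h

end betaFn

theorem stmt_0_general (γ ε : ℝ) (hγ : γ ∈ Set.Ioo (0:ℝ) 1)
    (K : ℕ) (μ : ℕ → ℝ)
    (μC : ℝ) (hμC : μC = ∑ k ∈ Finset.range K, μ k)
    (h0 : (1 - γ * (1 - ε) * μC) * μ 0 = 1 - γ)
    (hk : ∀ k, 0 < k → k < K →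
      (1 - γ * (1 - ε) * μC) * μ k = γ * (1 - (1 - ε) * μC) * μ (k - 1)) :
    (∀ k < K, μ k = (betaFn γ ε μC) ^ k * (1 - betaFn γ ε μC)) ∧
      μC = 1 - (betaFn γ ε μC) ^ K := by
  set β := betaFn γ ε μC
  have hD : 1 - γ * (1 - ε) * μC ≠ 0 := by
    intro hD
    rw [hD, zero_mul] at h0
    linarith [hγ.2]
  have hμ0 : μ 0 = 1 - β :=
    mul_left_cancel₀ hD (h0.trans ((one_sub_betaFn_mul hD).symm.trans (mul_comm _ _)))
  have hstep : ∀ k, k + 1 < K → μ (k + 1) = β * μ k := fun k hk1 =>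
    mul_left_cancel₀ hD <| by
      rw [hk (k + 1) k.succ_pos hk1, Nat.add_sub_cancel, ← betaFn_mul hD]
      ring
  have hμ : ∀ k < K, μ k = β ^ k * (1 - β) := fun k hkK => by
    rw [eq_pow_mul_of_succ_eq_mul hstep k hkK, hμ0]
  refine ⟨hμ, ?_⟩
  rw [hμC, Finset.sum_congr rfl fun k hkK => hμ k (Finset.mem_range.mp hkK)]
  exact sum_range_pow_mul_one_sub β K

theorem stmt_0 (γ ε : ℝ) (hγ : γ ∈ Set.Ioo (0:ℝ) 1) (hε : ε ∈ Set.Ioo (0:ℝ) 1)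
    (K : ℕ) (hK : 1 ≤ K) (μ : ℕ → ℝ) (hμ : ∀ k, 0 ≤ μ k)
    (μC : ℝ) (hμC : μC = ∑ k ∈ Finset.range K, μ k) (hle : μC ≤ 1)
    (h0 : (1 - γ * (1 - ε) * μC) * μ 0 = 1 - γ)
    (hk : ∀ k, 0 < k → k < K →
      (1 - γ * (1 - ε) * μC) * μ k = γ * (1 - (1 - ε) * μC) * μ (k - 1)) :
    (∀ k < K, μ k = (betaFn γ ε μC) ^ k * (1 - betaFn γ ε μC)) ∧
      μC = 1 - (betaFn γ ε μC) ^ K :=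
  stmt_0_general γ ε hγ K μ μC hμC h0 hk
end

section
/- For every γ, ε ∈ (0,1) and every integer K ≥ 1, there exists μ ∈ (0,1) such that μ = 1 - β(γ,ε,μ)^K. (That is, every GrimK strategy with K ≥ 1 admits at least one steady-state cooperator share in (0,1).) -/
theorem exists_mem_Ioo_fixedPoint_of_continuousOn {f : ℝ → ℝ} {a b : ℝ} (hab : a ≤ b)
    (hf : ContinuousOn f (Set.Icc a b)) (ha : a < f a) (hb : f b < b) :
    ∃ c ∈ Set.Ioo a b, c = f c := by
  have hg : ContinuousOn (fun x => f x - x) (Set.Icc a b) := hf.sub continuousOn_id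
  obtain ⟨c, hc, hfc⟩ := intermediate_value_Ioo' hab hg
    (show (0 : ℝ) ∈ Set.Ioo (f b - b) (f a - a) from ⟨by linarith, by linarith⟩)
  exact ⟨c, hc, by linarith [hfc]⟩

theorem betaFn_denom_pos {γ ε μ : ℝ} (hγ0 : 0 ≤ γ) (hγ1 : γ < 1) (hε0 : 0 ≤ ε)
    (hμ0 : 0 ≤ μ) (hμ1 : μ ≤ 1) : 0 < 1 - γ * (1 - ε) * μ := by
  have hεμ : (1 - ε) * μ ≤ 1 := by nlinarith
  nlinarith [mul_le_mul_of_nonneg_left hεμ hγ0]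

theorem continuousOn_betaFn {γ ε : ℝ} (hγ0 : 0 ≤ γ) (hγ1 : γ < 1) (hε0 : 0 ≤ ε) :
    ContinuousOn (betaFn γ ε) (Set.Icc 0 1) :=
  ContinuousOn.div (by fun_prop) (by fun_prop) fun _ hμ =>
    (betaFn_denom_pos hγ0 hγ1 hε0 hμ.1 hμ.2).ne'

@[simp]
theorem betaFn_zero (γ ε : ℝ) : betaFn γ ε 0 = γ := by
  simp [betaFn]

theorem betaFn_one_pos {γ ε : ℝ} (hγ0 : 0 < γ) (hγ1 : γ < 1) (hε0 : 0 < ε) :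
    0 < betaFn γ ε 1 := by
  have hden := betaFn_denom_pos hγ0.le hγ1 hε0.le zero_le_one le_rfl
  unfold betaFn
  exact div_pos (by nlinarith) hden

theorem stmt_1 (γ ε : ℝ) (hγ : γ ∈ Set.Ioo (0:ℝ) 1) (hε : ε ∈ Set.Ioo (0:ℝ) 1)
    (K : ℕ) (hK : 1 ≤ K) :
    ∃ μ ∈ Set.Ioo (0:ℝ) 1, μ = 1 - (betaFn γ ε μ) ^ K := by
  obtain ⟨hγ0, hγ1⟩ := hγ
  obtain ⟨hε0, -⟩ := hε
  have hcont : ContinuousOn (fun μ => 1 - betaFn γ ε μ ^ K) (Set.Icc 0 1) :=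
    continuousOn_const.sub ((continuousOn_betaFn hγ0.le hγ1 hε0.le).pow K)
  have hγK : γ ^ K < 1 := pow_lt_one₀ hγ0.le hγ1 (by omega)
  have hβK : 0 < betaFn γ ε 1 ^ K := pow_pos (betaFn_one_pos hγ0 hγ1 hε0) K
  exact exists_mem_Ioo_fixedPoint_of_continuousOn zero_le_one hcont
    (by simp only [betaFn_zero]; linarith) (by linarith)
end

section
/- Let γ, ε, μ ∈ (0,1), let K ≥ 1 be an integer, and let V : ℕ → ℝ satisfy V_k = 0 for all k ≥ K and V_k = (1-γ)·μ + γ·(1-ε)·μ·V_k + γ·(1-(1-ε)·μ)·V_{k+1} for all k < K. Then V_k = (1 - β(γ,ε,μ)^{K-k})·μ for every k < K. -/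
theorem eq_pow_mul_of_forall_eq_mul_succ {M : Type*} [Monoid M] {W : ℕ → M} {r : M} {K : ℕ}
    (h : ∀ k < K, W k = r * W (k + 1)) : ∀ k ≤ K, W k = r ^ (K - k) * W K := by
  intro k hk
  induction hk using Nat.decreasingInduction with
  | self => simp
  | of_succ k hk ih =>
    rw [h k hk, ih, ← mul_assoc, ← pow_succ', Nat.sub_add_eq, Nat.sub_add_cancel (by omega)]

theorem sub_eq_betaFn_mul_sub {γ ε μ x y : ℝ} (hD : 1 - γ * (1 - ε) * μ ≠ 0)
    (h : x = (1 - γ) * μ + γ * (1 - ε) * μ * x + γ * (1 - (1 - ε) * μ) * y) :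
    x - μ = betaFn γ ε μ * (y - μ) := by
  rw [betaFn, div_mul_eq_mul_div, eq_div_iff hD]
  linear_combination h

theorem stmt_3_general (γ ε μ : ℝ) (hγ : γ ∈ Set.Ioo (0:ℝ) 1) (hε : ε ∈ Set.Ioo (0:ℝ) 1)
    (hμ : μ ∈ Set.Ioo (0:ℝ) 1) (K : ℕ) (V : ℕ → ℝ)
    (hV0 : ∀ k, K ≤ k → V k = 0)
    (hVrec : ∀ k < K, V k = (1 - γ) * μ + γ * (1 - ε) * μ * V k
      + γ * (1 - (1 - ε) * μ) * V (k + 1)) :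
    ∀ k < K, V k = (1 - (betaFn γ ε μ) ^ (K - k)) * μ := by
  intro k hk
  have hD : 1 - γ * (1 - ε) * μ ≠ 0 := by
    have : γ * (1 - ε) * μ < 1 :=
      mul_lt_one_of_nonneg_of_lt_one_left (mul_nonneg hγ.1.le (by linarith [hε.2]))
        (mul_lt_one_of_nonneg_of_lt_one_left hγ.1.le hγ.2 (by linarith [hε.1])) hμ.2.le
    linarith
  have hgeom := eq_pow_mul_of_forall_eq_mul_succ (W := fun j => V j - μ)
    (fun j hj => sub_eq_betaFn_mul_sub hD (hVrec j hj)) k hk.le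
  simp only [hV0 K le_rfl] at hgeom
  linear_combination hgeom

theorem stmt_3 (γ ε μ : ℝ) (hγ : γ ∈ Set.Ioo (0:ℝ) 1) (hε : ε ∈ Set.Ioo (0:ℝ) 1)
    (hμ : μ ∈ Set.Ioo (0:ℝ) 1) (K : ℕ) (hK : 1 ≤ K) (V : ℕ → ℝ)
    (hV0 : ∀ k, K ≤ k → V k = 0)
    (hVrec : ∀ k < K, V k = (1 - γ) * μ + γ * (1 - ε) * μ * V k
      + γ * (1 - (1 - ε) * μ) * V (k + 1)) :
    ∀ k < K, V k = (1 - (betaFn γ ε μ) ^ (K - k)) * μ :=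
  stmt_3_general γ ε μ hγ hε hμ K V hV0 hVrec
end

section
/- Let γ, ε, μ ∈ (0,1), let K ≥ 1 be an integer, and let V : ℕ → ℝ satisfy V_k = 0 for all k ≥ K and V_k = (1-γ)·μ + γ·(1-ε)·μ·V_k + γ·(1-(1-ε)·μ)·V_{k+1} for all k < K. If in addition μ = 1 - β(γ,ε,μ)^K, then (1-ε)·(γ/(1-γ))·(V_0 - V_1) = ((1-ε)·(1-μ)/(1-(1-ε)·μ))·μ. -/
theorem sub_succ_eq_pow_mul_of_affine_rec {R : Type*} [CommRing R] (c β : R) :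
    ∀ (m : ℕ) (V : ℕ → R), (∀ k ≤ m, V k = c + β * V (k + 1)) →
      V 0 - V 1 = β ^ m * (V m - V (m + 1))
  | 0, _, _ => by simp
  | m + 1, V, hrec => by
    have hshift := sub_succ_eq_pow_mul_of_affine_rec c β m (fun k ↦ V (k + 1))
      fun k hk ↦ hrec (k + 1) (by omega)
    calc V 0 - V 1 = β * (V 1 - V 2) := by
          rw [hrec 0 (by omega), hrec 1 (by omega)]; ring
      _ = β ^ (m + 1) * (V (m + 1) - V (m + 2)) := by
          rw [hshift, pow_succ']; ring

theorem eq_div_add_div_mul_of_eq_add_mul_add {a p q x y : ℝ} (hp : 1 - p ≠ 0)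
    (h : x = a + p * x + q * y) : x = a / (1 - p) + q / (1 - p) * y := by
  field_simp
  linear_combination h

section

variable {γ ε μ : ℝ} (hγ : γ ∈ Set.Ioo (0:ℝ) 1) (hε : ε ∈ Set.Ioo (0:ℝ) 1)
  (hμ : μ ∈ Set.Ioo (0:ℝ) 1)

include hε hμ in
theorem one_sub_one_sub_mul_pos : 0 < 1 - (1 - ε) * μ := by
  nlinarith [hε.1, hε.2, hμ.1, hμ.2]

include hγ hε hμ in
theorem one_sub_mul_one_sub_mul_pos : 0 < 1 - γ * (1 - ε) * μ := by
  nlinarith [hγ.1, hγ.2, hε.1, hε.2, hμ.1, hμ.2, mul_pos (sub_pos.2 hε.2) hμ.1]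

include hγ hε hμ in
theorem future_loss_eq_of_betaFn_mul {b : ℝ} (hb : betaFn γ ε μ * b = 1 - μ) :
    (1 - ε) * (γ / (1 - γ)) * (b * ((1 - γ) * μ / (1 - γ * (1 - ε) * μ)))
      = (1 - ε) * (1 - μ) / (1 - (1 - ε) * μ) * μ := by
  have hd := (one_sub_mul_one_sub_mul_pos hγ hε hμ).ne'
  have he := (one_sub_one_sub_mul_pos hε hμ).ne'
  have hg : 1 - γ ≠ 0 := (sub_pos.2 hγ.2).ne'
  unfold betaFn at hb
  field_simp at hb ⊢
  linear_combination (1 - ε) * μ * hb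

end

theorem stmt_4 (γ ε μ : ℝ) (hγ : γ ∈ Set.Ioo (0:ℝ) 1) (hε : ε ∈ Set.Ioo (0:ℝ) 1)
    (hμ : μ ∈ Set.Ioo (0:ℝ) 1) (K : ℕ) (hK : 1 ≤ K) (V : ℕ → ℝ)
    (hV0 : ∀ k, K ≤ k → V k = 0)
    (hVrec : ∀ k < K, V k = (1 - γ) * μ + γ * (1 - ε) * μ * V k
      + γ * (1 - (1 - ε) * μ) * V (k + 1))
    (hfeas : μ = 1 - (betaFn γ ε μ) ^ K) :
    (1 - ε) * (γ / (1 - γ)) * (V 0 - V 1)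
      = ((1 - ε) * (1 - μ) / (1 - (1 - ε) * μ)) * μ := by
  set c := (1 - γ) * μ / (1 - γ * (1 - ε) * μ)
  obtain ⟨m, rfl⟩ : ∃ m, K = m + 1 := ⟨K - 1, by omega⟩
  have hrec : ∀ k < m + 1, V k = c + betaFn γ ε μ * V (k + 1) := fun k hk ↦
    eq_div_add_div_mul_of_eq_add_mul_add (one_sub_mul_one_sub_mul_pos hγ hε hμ).ne'
      (hVrec k hk)
  have hlast : V m - V (m + 1) = c := by
    rw [hrec m m.lt_succ_self, hV0 (m + 1) le_rfl]; ring
  have hdiff : V 0 - V 1 = betaFn γ ε μ ^ m * c := by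
    rw [sub_succ_eq_pow_mul_of_affine_rec c _ m V fun k hk ↦ hrec k (by omega), hlast]
  rw [hdiff]
  exact future_loss_eq_of_betaFn_mul hγ hε hμ (by rw [← pow_succ']; linarith)
end

section
/- Let γ, ε, μ ∈ (0,1) and l > 0, and set V = (1-γ)·μ/(1-γ·(1-ε)·μ). If (1-γ)·(-l) + γ·(1-ε)·V < 0, then γ·(1-ε)·μ < l/(1+l). (This is the record-(K-1) player's incentive argument: in any GrimK equilibrium with cooperator share μ^C, one must have γ·(1-ε)·μ^C < l/(1+l).) -/
/-!
Write `x = γ (1 - ε) μ < 1`. Then `γ (1 - ε) V = (1 - γ) · x / (1 - x)`, so the hypothesis says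
`(1 - γ) (x / (1 - x) - l) < 0`, i.e. `x / (1 - x) < l`, which rearranges to `x < l / (1 + l)`.
-/

section

variable {K : Type*} [Field K] [LinearOrder K] [IsStrictOrderedRing K]

theorem lt_div_one_add_of_div_one_sub_lt {x l : K} (hx : x < 1) (h : x / (1 - x) < l) :
    x < l / (1 + l) := by
  have hx' : 0 < 1 - x := sub_pos.2 hx
  rw [div_lt_iff₀ hx'] at h
  -- `(1 + l) (1 - x) > (1 - x) + x = 1`
  have hl : 0 < 1 + l := by nlinarith
  rw [lt_div_iff₀ hl]
  linarith

theorem mul_mul_lt_one_of_lt_one {a b c : K} (ha₀ : 0 ≤ a) (ha₁ : a < 1) (hb : b ≤ 1)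
    (hc₀ : 0 ≤ c) (hc₁ : c < 1) : a * b * c < 1 :=
  mul_lt_one_of_nonneg_of_lt_one_right (mul_lt_one_of_nonneg_of_lt_one_left ha₀ ha₁ hb).le hc₀ hc₁

end

theorem stmt_7_general (γ ε μ l : ℝ) (hγ : γ ∈ Set.Ioo (0:ℝ) 1) (hε : ε ∈ Set.Ioo (0:ℝ) 1)
    (hμ : μ ∈ Set.Ioo (0:ℝ) 1)
    (V : ℝ) (hV : V = (1 - γ) * μ / (1 - γ * (1 - ε) * μ))
    (h : (1 - γ) * (-l) + γ * (1 - ε) * V < 0) :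
    γ * (1 - ε) * μ < l / (1 + l) := by
  set x := γ * (1 - ε) * μ with hx_def
  have hx : x < 1 :=
    mul_mul_lt_one_of_lt_one hγ.1.le hγ.2 (by linarith [hε.1]) hμ.1.le hμ.2
  have hsplit : (1 - γ) * (-l) + γ * (1 - ε) * V = (1 - γ) * (x / (1 - x) - l) := by
    rw [hV, hx_def]
    ring
  rw [hsplit] at h
  have hgap : x / (1 - x) - l < 0 := neg_of_mul_neg_right h (sub_pos.2 hγ.2).le
  exact lt_div_one_add_of_div_one_sub_lt hx (sub_neg.1 hgap)

theorem stmt_7 (γ ε μ l : ℝ) (hγ : γ ∈ Set.Ioo (0:ℝ) 1) (hε : ε ∈ Set.Ioo (0:ℝ) 1)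
    (hμ : μ ∈ Set.Ioo (0:ℝ) 1) (hl : 0 < l)
    (V : ℝ) (hV : V = (1 - γ) * μ / (1 - γ * (1 - ε) * μ))
    (h : (1 - γ) * (-l) + γ * (1 - ε) * V < 0) :
    γ * (1 - ε) * μ < l / (1 + l) :=
  stmt_7_general γ ε μ l hγ hε hμ V hV h
end

section
/- Let γ, ε ∈ (0,1), g, l > 0, and μ ∈ (0,1). If μ satisfies both the cooperation constraint (ICC), ((1-ε)·(1-μ)/(1-(1-ε)·μ))·μ > g, and the defection constraint (ICD), μ < (1/(γ·(1-ε)))·(l/(1+l)), then γ·(1-ε)·g < l/(1+l). In particular, (ICC) alone implies g < μ. -/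
/-! Write `k = 1 - ε`. The factor `k (1 - μ) / (1 - k μ)` in (ICC) is below `1` exactly because
`k < 1`, so (ICC) forces `g < μ`; multiplying by `γ k > 0` and chaining with (ICD) gives the bound. -/

lemma div_one_sub_mul_lt_one {k μ : ℝ} (hk : k < 1) (hden : 0 < 1 - k * μ) :
    k * (1 - μ) / (1 - k * μ) < 1 := by
  rw [div_lt_one hden]
  linarith

lemma lt_of_lt_div_one_sub_mul_mul {k g μ : ℝ} (hk : k < 1) (hμ : μ ∈ Set.Ioo (0 : ℝ) 1)
    (h : g < k * (1 - μ) / (1 - k * μ) * μ) : g < μ := by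
  obtain ⟨hμ0, hμ1⟩ := hμ
  have hden : 0 < 1 - k * μ := by nlinarith
  exact h.trans (mul_lt_of_lt_one_left hμ0 (div_one_sub_mul_lt_one hk hden))

theorem stmt_8_general (γ ε g l μ : ℝ) (hγ : γ ∈ Set.Ioo (0:ℝ) 1) (hε : ε ∈ Set.Ioo (0:ℝ) 1)
    (hμ : μ ∈ Set.Ioo (0:ℝ) 1) :
    ((((1 - ε) * (1 - μ) / (1 - (1 - ε) * μ)) * μ > g ∧
        μ < (1 / (γ * (1 - ε))) * (l / (1 + l))) →
      γ * (1 - ε) * g < l / (1 + l)) ∧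
    ((((1 - ε) * (1 - μ) / (1 - (1 - ε) * μ)) * μ > g) → g < μ) := by
  have hcoop : (1 - ε) * (1 - μ) / (1 - (1 - ε) * μ) * μ > g → g < μ :=
    lt_of_lt_div_one_sub_mul_mul (by linarith [hε.1]) hμ
  refine ⟨fun ⟨hC, hD⟩ => ?_, hcoop⟩
  have hpos : 0 < γ * (1 - ε) := mul_pos hγ.1 (by linarith [hε.2])
  rw [one_div_mul_eq_div, lt_div_iff₀' hpos] at hD
  calc γ * (1 - ε) * g < γ * (1 - ε) * μ := mul_lt_mul_of_pos_left (hcoop hC) hpos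
    _ < l / (1 + l) := hD

theorem stmt_8 (γ ε g l μ : ℝ) (hγ : γ ∈ Set.Ioo (0:ℝ) 1) (hε : ε ∈ Set.Ioo (0:ℝ) 1)
    (hg : 0 < g) (hl : 0 < l) (hμ : μ ∈ Set.Ioo (0:ℝ) 1) :
    ((((1 - ε) * (1 - μ) / (1 - (1 - ε) * μ)) * μ > g ∧
        μ < (1 / (γ * (1 - ε))) * (l / (1 + l))) →
      γ * (1 - ε) * g < l / (1 + l)) ∧
    ((((1 - ε) * (1 - μ) / (1 - (1 - ε) * μ)) * μ > g) → g < μ) :=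
  stmt_8_general γ ε g l μ hγ hε hμ
end

section
/- Let g, l > 0 with g > l/(1+l). Then there exist γ̄ ∈ (0,1) and ε̄ ∈ (0,1) such that for every γ ∈ (γ̄, 1) and every ε ∈ (0, ε̄), no μ ∈ (0,1) satisfies both the cooperation constraint (ICC) and the defection constraint (ICD). (Hence when g > l/(1+l), no GrimK equilibrium with a positive share of cooperators exists for survival probability near 1 and noise near 0, and the maximal equilibrium cooperator share converges to 0 in the double limit (γ,ε) → (1,0).) -/
/-!
The factor multiplying `μ` in (ICC) is at most `1`, so (ICC) forces `g < μ`, while (ICD) says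
`γ (1 - ε) μ < l / (1 + l)`. Once `γ (1 - ε) > l / ((1 + l) g)`, which holds for `γ` near `1` and
`ε` near `0` because `g > l / (1 + l)`, the two are incompatible.
-/

def CooperationConstraint (g ε μ : ℝ) : Prop :=
  ((1 - ε) * (1 - μ) / (1 - (1 - ε) * μ)) * μ > g

def DefectionConstraint (l γ ε μ : ℝ) : Prop :=
  μ < (1 / (γ * (1 - ε))) * (l / (1 + l))

lemma continuation_factor_le_one {ε μ : ℝ} (hε : ε ∈ Set.Icc (0:ℝ) 1) (hμ : μ ∈ Set.Ico (0:ℝ) 1) :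
    (1 - ε) * (1 - μ) / (1 - (1 - ε) * μ) ≤ 1 := by
  obtain ⟨hε0, hε1⟩ := hε
  obtain ⟨hμ0, hμ1⟩ := hμ
  have hden : 0 < 1 - (1 - ε) * μ := by nlinarith
  rw [div_le_one hden]
  nlinarith

lemma CooperationConstraint.lt {g ε μ : ℝ} (h : CooperationConstraint g ε μ)
    (hε : ε ∈ Set.Icc (0:ℝ) 1) (hμ : μ ∈ Set.Ico (0:ℝ) 1) : g < μ :=
  calc g < (1 - ε) * (1 - μ) / (1 - (1 - ε) * μ) * μ := h
    _ ≤ 1 * μ := mul_le_mul_of_nonneg_right (continuation_factor_le_one hε hμ) hμ.1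
    _ = μ := one_mul μ

lemma DefectionConstraint.mul_lt {l γ ε μ : ℝ} (h : DefectionConstraint l γ ε μ)
    (hγε : 0 < γ * (1 - ε)) : γ * (1 - ε) * μ < l / (1 + l) := by
  unfold DefectionConstraint at h
  rw [one_div, inv_mul_eq_div, lt_div_iff₀ hγε] at h
  linarith

lemma not_cooperationConstraint_and_defectionConstraint {g l γ ε μ : ℝ}
    (hγε : 0 < γ * (1 - ε)) (hgl : l / (1 + l) < γ * (1 - ε) * g)
    (hε : ε ∈ Set.Icc (0:ℝ) 1) (hμ : μ ∈ Set.Ico (0:ℝ) 1) :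
    ¬ (CooperationConstraint g ε μ ∧ DefectionConstraint l γ ε μ) := by
  rintro ⟨hC, hD⟩
  have hgμ : γ * (1 - ε) * g < γ * (1 - ε) * μ :=
    mul_lt_mul_of_pos_left (hC.lt hε hμ) hγε
  linarith [hD.mul_lt hγε]

/-- With `s = (1 + c) / 2` we get `γ (1 - ε) > s ^ 2 ≥ c`. -/
lemma lt_mul_one_sub_of_midpoint_lt {c γ ε : ℝ} (hc : 0 ≤ c) (hγ : (1 + c) / 2 < γ)
    (hε : ε < (1 - c) / 2) : c < γ * (1 - ε) := by
  have hs : 0 < (1 + c) / 2 := by linarith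
  calc c ≤ (1 + c) / 2 * ((1 + c) / 2) := by nlinarith [sq_nonneg (1 - c)]
    _ < γ * (1 - ε) := mul_lt_mul'' hγ (by linarith) hs.le hs.le

theorem stmt_9_general (g l : ℝ) (hl : 0 < l) (hgl : g > l / (1 + l)) :
    ∃ γbar ∈ Set.Ioo (0:ℝ) 1, ∃ εbar ∈ Set.Ioo (0:ℝ) 1,
      ∀ γ ∈ Set.Ioo γbar 1, ∀ ε ∈ Set.Ioo (0:ℝ) εbar,
        ¬ ∃ μ ∈ Set.Ioo (0:ℝ) 1,
          (((1 - ε) * (1 - μ) / (1 - (1 - ε) * μ)) * μ > g ∧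
            μ < (1 / (γ * (1 - ε))) * (l / (1 + l))) := by
  have hL : 0 < l / (1 + l) := by positivity
  have hg : 0 < g := hL.trans hgl
  set c := l / (1 + l) / g
  have hc0 : 0 < c := div_pos hL hg
  have hc1 : c < 1 := (div_lt_one hg).mpr hgl
  refine ⟨(1 + c) / 2, ⟨by linarith, by linarith⟩, (1 - c) / 2, ⟨by linarith, by linarith⟩, ?_⟩
  rintro γ ⟨hγ, -⟩ ε ⟨hε0, hε⟩ ⟨μ, hμ, hμC, hμD⟩
  have hcγε : c < γ * (1 - ε) := lt_mul_one_sub_of_midpoint_lt hc0.le hγ hε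
  have hgl' : l / (1 + l) < γ * (1 - ε) * g := by
    rwa [div_lt_iff₀ hg] at hcγε
  exact not_cooperationConstraint_and_defectionConstraint (hc0.trans hcγε) hgl'
    ⟨hε0.le, by linarith⟩ ⟨hμ.1.le, hμ.2⟩ ⟨hμC, hμD⟩

theorem stmt_9 (g l : ℝ) (hg : 0 < g) (hl : 0 < l) (hgl : g > l / (1 + l)) :
    ∃ γbar ∈ Set.Ioo (0:ℝ) 1, ∃ εbar ∈ Set.Ioo (0:ℝ) 1,
      ∀ γ ∈ Set.Ioo γbar 1, ∀ ε ∈ Set.Ioo (0:ℝ) εbar,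
        ¬ ∃ μ ∈ Set.Ioo (0:ℝ) 1,
          (((1 - ε) * (1 - μ) / (1 - (1 - ε) * μ)) * μ > g ∧
            μ < (1 / (γ * (1 - ε))) * (l / (1 + l))) :=
  stmt_9_general g l hl hgl
end

section
/- Let g, l > 0 with g < l/(1+l). For γ, ε ∈ (0,1), define S(γ,ε) = {μ ∈ (0,1) : there exists K ∈ ℕ with μ = 1 - β(γ,ε,μ)^K, and μ satisfies both (ICC) and (ICD)}, and let μ̄(γ,ε) be the supremum of S(γ,ε) ∪ {0}. Then for every δ > 0 there exist γ̄ ∈ (0,1) and ε̄ ∈ (0,1) such that for every γ ∈ (γ̄, 1) and every ε ∈ (0, ε̄), |μ̄(γ,ε) - l/(1+l)| < δ. (That is, the maximal share of cooperators attainable in a GrimK equilibrium converges to l/(1+l) in the double limit (γ,ε) → (1,0).) -/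
noncomputable def eqShares (g l γ ε : ℝ) : Set ℝ :=
  {μ | μ ∈ Set.Ioo (0:ℝ) 1 ∧ (∃ K : ℕ, μ = 1 - (betaFn γ ε μ) ^ K) ∧
    ((1 - ε) * (1 - μ) / (1 - (1 - ε) * μ)) * μ > g ∧
    μ < (1 / (γ * (1 - ε))) * (l / (1 + l))}

/-!
Write `μ* = l / (1 + l)`. From above, (ICD) bounds every equilibrium share by
`μ* / (γ (1 - ε)) → μ*`. From below, fix a window `(w, μ*)` with `w ≥ g`. The real index
`K(μ) = log_β (1 - μ)`, for which `μ = 1 - β ^ K`, satisfies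
`(1 - γ) K(μ) → -(1 - μ) log (1 - μ)` as `(γ, ε) → (1, 0)`. This limit is strictly concave,
hence not constant on the window, so once `γ` is close to `1` the index `K` varies by more
than `1` across the window, and the intermediate value theorem yields a share in the window
with integral `K`. For small `ε`, (ICC) holds uniformly on the window, and (ICD) holds
trivially below `μ*`.
-/

open Real Set Filter Topology

section BetaFn

variable {γ ε μ : ℝ}

lemma betaFn_denom_pos_s10 (hγ : γ ≤ 1) (hε : ε ∈ Icc 0 1) (hμ : μ ∈ Ico 0 1) :
    0 < 1 - γ * (1 - ε) * μ := by
  obtain ⟨hε0, hε1⟩ := hε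
  obtain ⟨hμ0, hμ1⟩ := hμ
  nlinarith [mul_nonneg (sub_nonneg.2 hγ) (mul_nonneg (sub_nonneg.2 hε1) hμ0),
    mul_nonneg hε0 hμ0]

lemma one_sub_betaFn (hd : 1 - γ * (1 - ε) * μ ≠ 0) :
    1 - betaFn γ ε μ = (1 - γ) / (1 - γ * (1 - ε) * μ) := by
  rw [betaFn]; field_simp; ring

lemma betaFn_pos (hγ : γ ∈ Ioo 0 1) (hε : ε ∈ Icc 0 1) (hμ : μ ∈ Ico 0 1) :
    0 < betaFn γ ε μ := by
  have : 0 < 1 - (1 - ε) * μ := by simpa using betaFn_denom_pos_s10 le_rfl hε hμ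
  exact div_pos (mul_pos hγ.1 this) (betaFn_denom_pos_s10 hγ.2.le hε hμ)

lemma betaFn_lt_one (hγ : γ ∈ Ioo 0 1) (hε : ε ∈ Icc 0 1) (hμ : μ ∈ Ico 0 1) :
    betaFn γ ε μ < 1 := by
  have hd := betaFn_denom_pos_s10 hγ.2.le hε hμ
  have : 0 < 1 - betaFn γ ε μ := by
    rw [one_sub_betaFn hd.ne']; exact div_pos (sub_pos.2 hγ.2) hd
  linarith

end BetaFn

/-- The real `K` with `μ = 1 - β(γ, ε, μ) ^ K`; `μ` is a feasible GrimK share iff `K ∈ ℕ`. -/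
noncomputable def grimIndex (γ ε μ : ℝ) : ℝ := logb (betaFn γ ε μ) (1 - μ)

section GrimIndex

variable {γ ε μ : ℝ}

lemma eq_one_sub_pow_of_grimIndex_eq {n : ℕ} (hγ : γ ∈ Ioo 0 1) (hε : ε ∈ Icc 0 1)
    (hμ : μ ∈ Ico 0 1) (h : grimIndex γ ε μ = n) : μ = 1 - betaFn γ ε μ ^ n := by
  have h1 := betaFn_lt_one hγ hε hμ
  have hpow := rpow_logb (betaFn_pos hγ hε hμ) h1.ne (sub_pos.2 hμ.2)
  rw [← grimIndex, h, rpow_natCast] at hpow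
  linarith

lemma continuousOn_grimIndex (hγ : γ ∈ Ioo 0 1) (hε : ε ∈ Icc 0 1) :
    ContinuousOn (grimIndex γ ε) (Ico 0 1) := by
  have hβ : ContinuousOn (betaFn γ ε) (Ico 0 1) := by
    unfold betaFn
    exact ContinuousOn.div (by fun_prop) (by fun_prop)
      fun μ hμ => (betaFn_denom_pos_s10 hγ.2.le hε hμ).ne'
  refine ContinuousOn.div ((continuousOn_const.sub continuousOn_id).log ?_) (hβ.log ?_) ?_
  · exact fun μ hμ => (sub_pos.2 hμ.2).ne'
  · exact fun μ hμ => (betaFn_pos hγ hε hμ).ne'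
  · exact fun μ hμ => (log_neg (betaFn_pos hγ hε hμ) (betaFn_lt_one hγ hε hμ)).ne

/-- `(1 - γ) K` is squeezed between two expressions that both tend to `-(1 - μ) log (1 - μ)`. -/
lemma grimIndex_bounds (hγ : γ ∈ Ioo 0 1) (hε : ε ∈ Icc 0 1) (hμ : μ ∈ Ico 0 1) :
    -log (1 - μ) * (γ * (1 - (1 - ε) * μ)) ≤ (1 - γ) * grimIndex γ ε μ ∧
      (1 - γ) * grimIndex γ ε μ ≤ -log (1 - μ) * (1 - γ * (1 - ε) * μ) := by
  have hK :
      (1 - γ) * grimIndex γ ε μ = -log (1 - μ) * ((1 - γ) / -log (betaFn γ ε μ)) := by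
    rw [grimIndex, logb]; ring
  set β := betaFn γ ε μ with hβ
  have hβ0 : 0 < β := betaFn_pos hγ hε hμ
  have hlogβ : 0 < -log β := neg_pos.2 (log_neg hβ0 (betaFn_lt_one hγ hε hμ))
  have hL : 0 ≤ -log (1 - μ) :=
    neg_nonneg.2 (log_nonpos (by linarith [hμ.2]) (by linarith [hμ.1]))
  have hD := betaFn_denom_pos_s10 hγ.2.le hε hμ
  have hN : 0 < γ * (1 - (1 - ε) * μ) := by
    have : 0 < 1 - (1 - ε) * μ := by simpa using betaFn_denom_pos_s10 le_rfl hε hμ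
    exact mul_pos hγ.1 this
  -- `1 - β ≤ -log β ≤ β⁻¹ - 1`, and both ends are `1 - γ` divided by the factors above
  have hlow : (1 - γ) / (1 - γ * (1 - ε) * μ) ≤ -log β := by
    rw [← one_sub_betaFn hD.ne']; linarith [log_le_sub_one_of_pos hβ0]
  have hup : -log β ≤ (1 - γ) / (γ * (1 - (1 - ε) * μ)) := by
    have : β⁻¹ - 1 = (1 - γ) / (γ * (1 - (1 - ε) * μ)) := by
      rw [show β⁻¹ - 1 = (1 - β) / β by field_simp, one_sub_betaFn hD.ne', hβ, betaFn,
        div_div_div_cancel_right₀ hD.ne']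
    linarith [one_sub_inv_le_log_of_pos hβ0]
  rw [hK]
  constructor
  · exact mul_le_mul_of_nonneg_left ((le_div_iff₀ hlogβ).2 ((le_div_iff₀' hN).1 hup)) hL
  · exact mul_le_mul_of_nonneg_left ((div_le_iff₀ hlogβ).2 ((div_le_iff₀' hD).1 hlow)) hL

end GrimIndex

lemma StrictConcaveOn.exists_lt_on_Ioo {s : Set ℝ} {f : ℝ → ℝ}
    (hf : StrictConcaveOn ℝ s f) {u v : ℝ} (hu : u ∈ s) (hv : v ∈ s) (huv : u < v) :
    ∃ x ∈ Ioo u v, ∃ y ∈ Ioo u v, f x < f y := by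
  obtain ⟨p₁, p₂, p₃, h₁, h₂, h₃, h₄⟩ :
      ∃ p₁ p₂ p₃ : ℝ, u < p₁ ∧ p₁ < p₂ ∧ p₂ < p₃ ∧ p₃ < v :=
    ⟨u + (v - u) / 4, (u + v) / 2, v - (v - u) / 4, by linarith, by linarith, by linarith,
      by linarith⟩
  have hs := hf.1.ordConnected
  have hmin : min (f p₁) (f p₃) < f p₂ :=
    hf.lt_on_openSegment (hs.out hu hv ⟨by linarith, by linarith⟩)
      (hs.out hu hv ⟨by linarith, by linarith⟩) (by linarith)
      (by rw [openSegment_eq_Ioo (by linarith)]; exact ⟨h₂, h₃⟩)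
  have hp₂ : p₂ ∈ Ioo u v := ⟨by linarith, by linarith⟩
  rcases min_choice (f p₁) (f p₃) with h | h
  · exact ⟨p₁, ⟨h₁, by linarith⟩, p₂, hp₂, h ▸ hmin⟩
  · exact ⟨p₃, ⟨by linarith, h₄⟩, p₂, hp₂, h ▸ hmin⟩

lemma exists_negMulLog_one_sub_lt {w t : ℝ} (hwt : w < t) (ht : t ≤ 1) :
    ∃ x ∈ Ioo w t, ∃ y ∈ Ioo w t, negMulLog (1 - x) < negMulLog (1 - y) := by
  obtain ⟨x, hx, y, hy, hxy⟩ := strictConcaveOn_negMulLog.exists_lt_on_Ioo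
    (u := 1 - t) (v := 1 - w) (sub_nonneg.2 ht) (by simp only [mem_Ici]; linarith)
    (by linarith)
  refine ⟨1 - x, ⟨by linarith [hx.2], by linarith [hx.1]⟩,
    1 - y, ⟨by linarith [hy.2], by linarith [hy.1]⟩, ?_⟩
  simpa only [sub_sub_cancel] using hxy

lemma exists_eq_one_sub_betaFn_pow_mem_uIcc {γ ε x y : ℝ} (hγ : γ ∈ Ioo 0 1)
    (hε : ε ∈ Icc 0 1) (hx : x ∈ Ico 0 1) (hy : y ∈ Ico 0 1)
    (hgap : 1 ≤ grimIndex γ ε y - grimIndex γ ε x) :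
    ∃ μ ∈ uIcc x y, ∃ n : ℕ, μ = 1 - betaFn γ ε μ ^ n := by
  have hsub : uIcc x y ⊆ Ico 0 1 := ordConnected_Ico.uIcc_subset hx hy
  set n := ⌈grimIndex γ ε x⌉₊
  have hKx : 0 ≤ grimIndex γ ε x :=
    logb_nonneg_of_base_lt_one (betaFn_pos hγ hε hx) (betaFn_lt_one hγ hε hx)
      (sub_pos.2 hx.2) (by linarith [hx.1])
  have hn : (n : ℝ) ∈ uIcc (grimIndex γ ε x) (grimIndex γ ε y) :=
    Icc_subset_uIcc ⟨Nat.le_ceil _, by linarith [Nat.ceil_lt_add_one hKx]⟩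
  obtain ⟨μ, hμ, hμn⟩ :=
    intermediate_value_uIcc ((continuousOn_grimIndex hγ hε).mono hsub) hn
  exact ⟨μ, hμ, n, eq_one_sub_pow_of_grimIndex_eq hγ hε (hsub hμ) hμn⟩

lemma cooperation_constraint_of_mem_Icc {g ε μ a b : ℝ} (ha : 0 < a) (hga : g < a)
    (hμ : μ ∈ Icc a b) (hb : b < 1) (hε : ε ∈ Ico 0 ((1 - b) * (a - g))) :
    ((1 - ε) * (1 - μ) / (1 - (1 - ε) * μ)) * μ > g := by
  obtain ⟨haμ, hμb⟩ := hμ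
  obtain ⟨hε0, hεab⟩ := hε
  have hd : 0 < 1 - (1 - ε) * μ := by nlinarith
  rw [gt_iff_lt, div_mul_eq_mul_div, lt_div_iff₀ hd]
  -- the claim is `ε μ (1 - μ + g) < (1 - μ) (μ - g)`, and `μ (1 - μ + g) ≤ μ < 1`
  have hwin : (1 - b) * (a - g) ≤ (1 - μ) * (μ - g) :=
    mul_le_mul (by linarith) (by linarith) (by linarith) (by linarith)
  nlinarith [mul_le_mul_of_nonneg_left (show μ * (1 - μ + g) ≤ 1 by nlinarith) hε0]

lemma eqShares_union_subset (g l γ ε : ℝ) :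
    eqShares g l γ ε ∪ {0} ⊆ Iic (max 0 (1 / (γ * (1 - ε)) * (l / (1 + l)))) := by
  rintro μ (⟨-, -, -, hICD⟩ | rfl)
  · exact hICD.le.trans (le_max_right _ _)
  · exact mem_Iic.2 (le_max_left _ _)

lemma sSup_eqShares_union_le (g l γ ε : ℝ) :
    sSup (eqShares g l γ ε ∪ {0}) ≤ max 0 (1 / (γ * (1 - ε)) * (l / (1 + l))) :=
  csSup_le ⟨0, Or.inr rfl⟩ (eqShares_union_subset g l γ ε)

local notation "𝓕" => 𝓝[<] (1 : ℝ) ×ˢ 𝓝[>] (0 : ℝ)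

lemma le_nhds_one_zero : 𝓕 ≤ 𝓝 ((1 : ℝ), (0 : ℝ)) := by
  rw [nhds_prod_eq]; exact prod_mono nhdsWithin_le_nhds nhdsWithin_le_nhds

lemma eventually_mem_Ioo_prod :
    ∀ᶠ p in 𝓕, p.1 ∈ Ioo (0 : ℝ) 1 ∧ p.2 ∈ Ioo (0 : ℝ) 1 :=
  Eventually.prod_mk (Ioo_mem_nhdsLT one_pos) (Ioo_mem_nhdsGT one_pos)

lemma tendsto_one_sub_mul_grimIndex {μ : ℝ} (hμ : μ ∈ Ico 0 1) :
    Tendsto (fun p : ℝ × ℝ => (1 - p.1) * grimIndex p.1 p.2 μ) 𝓕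
      (𝓝 (negMulLog (1 - μ))) := by
  have hlim : ∀ f : ℝ × ℝ → ℝ, Continuous f → f (1, 0) = negMulLog (1 - μ) →
      Tendsto f 𝓕 (𝓝 (negMulLog (1 - μ))) := fun f hf h1 =>
    h1 ▸ (hf.tendsto _).mono_left le_nhds_one_zero
  have hbounds : ∀ᶠ p in 𝓕, _ := eventually_mem_Ioo_prod.mono fun p hp =>
    grimIndex_bounds hp.1 (Ioo_subset_Icc_self hp.2) hμ
  refine tendsto_of_tendsto_of_tendsto_of_le_of_le' (hlim _ (by fun_prop) ?_)
    (hlim _ (by fun_prop) ?_) (hbounds.mono fun _ h => h.1) (hbounds.mono fun _ h => h.2) <;>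
  · simp only [negMulLog]; ring

lemma eventually_one_le_grimIndex_sub {x y : ℝ} (hx : x ∈ Ico 0 1) (hy : y ∈ Ico 0 1)
    (hxy : negMulLog (1 - x) < negMulLog (1 - y)) :
    ∀ᶠ p in 𝓕, 1 ≤ grimIndex p.1 p.2 y - grimIndex p.1 p.2 x := by
  set Δ := negMulLog (1 - y) - negMulLog (1 - x)
  have hΔ : 0 < Δ := sub_pos.2 hxy
  have hdiff : ∀ᶠ p in 𝓕,
      Δ / 2 < (1 - p.1) * grimIndex p.1 p.2 y - (1 - p.1) * grimIndex p.1 p.2 x :=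
    ((tendsto_one_sub_mul_grimIndex hy).sub
      (tendsto_one_sub_mul_grimIndex hx)).eventually_const_lt (by linarith)
  have hsmall : ∀ᶠ p in 𝓕, 1 - p.1 < Δ / 2 := by
    have : Tendsto (fun p : ℝ × ℝ => 1 - p.1) 𝓕 (𝓝 (1 - (1, (0 : ℝ)).1)) :=
      ((continuous_const.sub continuous_fst).tendsto _).mono_left le_nhds_one_zero
    exact this.eventually_lt_const (by simp only [sub_self]; linarith)
  filter_upwards [hdiff, hsmall, eventually_mem_Ioo_prod] with p hdiff hsmall hp
  have h1γ : 0 < 1 - p.1 := sub_pos.2 hp.1.2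
  refine le_of_mul_le_mul_left ?_ h1γ
  rw [mul_sub]; linarith

lemma eventually_lt_sSup_eqShares {g l w : ℝ} (hw : 0 ≤ w) (hgw : g ≤ w)
    (hwl : w < l / (1 + l)) (hl : l / (1 + l) ≤ 1) :
    ∀ᶠ p in 𝓕, w < sSup (eqShares g l p.1 p.2 ∪ {0}) := by
  obtain ⟨x, hx, y, hy, hxy⟩ := exists_negMulLog_one_sub_lt hwl hl
  have hwin : uIcc x y ⊆ Ioo w (l / (1 + l)) := ordConnected_Ioo.uIcc_subset hx hy
  have hIco : Ioo w (l / (1 + l)) ⊆ Ico 0 1 := fun μ hμ =>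
    ⟨by linarith [hμ.1], by linarith [hμ.2]⟩
  have hx' := hIco (hwin left_mem_uIcc)
  have hy' := hIco (hwin right_mem_uIcc)
  set a := min x y
  set b := max x y
  have ha : w < a := lt_min hx.1 hy.1
  have hb : b < l / (1 + l) := max_lt hx.2 hy.2
  have hsmall : ∀ᶠ p in 𝓕, p.2 < (1 - b) * (a - g) :=
    Eventually.prod_inr (mem_nhdsWithin_of_mem_nhds
      (Iio_mem_nhds (mul_pos (by linarith) (by linarith)))) _
  filter_upwards [eventually_mem_Ioo_prod, eventually_one_le_grimIndex_sub hx' hy' hxy, hsmall]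
    with ⟨γ, ε⟩ ⟨hγ, hε⟩ hgap hsmall
  obtain ⟨μ, hμ, n, hn⟩ :=
    exists_eq_one_sub_betaFn_pow_mem_uIcc hγ (Ioo_subset_Icc_self hε) hx' hy' hgap
  have hμl := (hwin hμ).2
  have hμS : μ ∈ eqShares g l γ ε := by
    refine ⟨⟨by linarith [hμ.1], by linarith⟩, ⟨n, hn⟩,
      cooperation_constraint_of_mem_Icc (by linarith) (by linarith) hμ (by linarith)
        ⟨hε.1.le, hsmall⟩, ?_⟩
    have hγε : 0 < γ * (1 - ε) := mul_pos hγ.1 (sub_pos.2 hε.2)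
    have hγε1 : γ * (1 - ε) ≤ 1 :=
      mul_le_one₀ hγ.2.le (by linarith [hε.2]) (by linarith [hε.1])
    exact hμl.trans_le (le_mul_of_one_le_left (by linarith) (one_le_one_div hγε hγε1))
  exact (ha.trans_le hμ.1).trans_le
    (le_csSup ⟨_, eqShares_union_subset g l γ ε⟩ (Or.inl hμS))

theorem tendsto_sSup_eqShares {g l : ℝ} (hl : 0 < l) (hgl : g < l / (1 + l)) :
    Tendsto (fun p : ℝ × ℝ => sSup (eqShares g l p.1 p.2 ∪ {0})) 𝓕
      (𝓝 (l / (1 + l))) := by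
  have hl0 : 0 < l / (1 + l) := by positivity
  have hl1 : l / (1 + l) ≤ 1 := (div_le_one (by linarith)).2 (by linarith)
  refine tendsto_order.2 ⟨fun w hw => ?_, fun w hw => ?_⟩
  · filter_upwards [eventually_lt_sSup_eqShares (le_max_right (max g w) 0)
      ((le_max_left g w).trans (le_max_left _ 0)) (max_lt (max_lt hgl hw) hl0) hl1] with p hp
    exact ((le_max_right g w).trans (le_max_left _ 0)).trans_lt hp
  · set bound := fun p : ℝ × ℝ => max 0 (1 / (p.1 * (1 - p.2)) * (l / (1 + l)))
    have hcont : ContinuousAt bound (1, 0) := by fun_prop (disch := norm_num)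
    have hbound : Tendsto bound 𝓕 (𝓝 (l / (1 + l))) := by
      simpa [bound, hl0.le] using hcont.tendsto.mono_left le_nhds_one_zero
    filter_upwards [hbound.eventually_lt_const hw] with p hp
    exact (sSup_eqShares_union_le g l p.1 p.2).trans_lt hp

lemma exists_Ioo_of_eventually {P : ℝ → ℝ → Prop} (h : ∀ᶠ p in 𝓕, P p.1 p.2) :
    ∃ γbar ∈ Ioo (0 : ℝ) 1, ∃ εbar ∈ Ioo (0 : ℝ) 1,
      ∀ γ ∈ Ioo γbar 1, ∀ ε ∈ Ioo 0 εbar, P γ ε := by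
  obtain ⟨s, hs, t, ht, hst⟩ := mem_prod_iff.1 h
  obtain ⟨γ₀, hγ₀, hγs⟩ := mem_nhdsLT_iff_exists_Ioo_subset.1 hs
  obtain ⟨ε₀, hε₀, hεt⟩ := mem_nhdsGT_iff_exists_Ioo_subset.1 ht
  refine ⟨max γ₀ (1 / 2), ⟨by positivity, max_lt hγ₀ (by norm_num)⟩,
    min ε₀ (1 / 2), ⟨lt_min hε₀ (by norm_num), by norm_num⟩, fun γ hγ ε hε => ?_⟩
  exact @hst (γ, ε) ⟨hγs ⟨(le_max_left _ _).trans_lt hγ.1, hγ.2⟩,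
    hεt ⟨hε.1, hε.2.trans_le (min_le_left _ _)⟩⟩

theorem stmt_10_general (g l : ℝ) (hl : 0 < l) (hgl : g < l / (1 + l)) :
    ∀ δ > (0:ℝ), ∃ γbar ∈ Set.Ioo (0:ℝ) 1, ∃ εbar ∈ Set.Ioo (0:ℝ) 1,
      ∀ γ ∈ Set.Ioo γbar 1, ∀ ε ∈ Set.Ioo (0:ℝ) εbar,
        |sSup (eqShares g l γ ε ∪ {0}) - l / (1 + l)| < δ := fun δ hδ =>
  exists_Ioo_of_eventually (Metric.tendsto_nhds.1 (tendsto_sSup_eqShares hl hgl) δ hδ)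

theorem stmt_10 (g l : ℝ) (hg : 0 < g) (hl : 0 < l) (hgl : g < l / (1 + l)) :
    ∀ δ > (0:ℝ), ∃ γbar ∈ Set.Ioo (0:ℝ) 1, ∃ εbar ∈ Set.Ioo (0:ℝ) 1,
      ∀ γ ∈ Set.Ioo γbar 1, ∀ ε ∈ Set.Ioo (0:ℝ) εbar,
        |sSup (eqShares g l γ ε ∪ {0}) - l / (1 + l)| < δ :=
  stmt_10_general g l hl hgl
end

section
/- Fix an integer K ≥ 1 and γ, ε ∈ (0,1), and let F and D be as defined. If x, x̃ ∈ D satisfy x̃_k ≤ x_k for all k < K, then F(x̃)_k ≤ F(x)_k for all k < K. Moreover, F maps D into D. -/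
/-- The set of monotone cumulative record distributions (only indices `< K` matter). -/
def grimD (K : ℕ) : Set (ℕ → ℝ) :=
  {x | 0 ≤ x 0 ∧ (∀ k, k + 1 < K → x k ≤ x (k + 1)) ∧ x (K - 1) ≤ 1}

/-- The GrimK one-period update map on cumulative record distributions. -/
def grimF (K : ℕ) (γ ε : ℝ) (x : ℕ → ℝ) : ℕ → ℝ := fun k =>
  if k = 0 then 1 - γ + γ * (1 - ε) * x (K - 1) * x 0
  else 1 - γ + γ * x (k - 1) + γ * (1 - ε) * x (K - 1) * (x k - x (k - 1))

/-!
With `a = (1 - ε) x_{K-1}` and the convention `x_{-1} = 0`, every coordinate of the update is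
`F(x)_k = 1 - γ + γ ((1 - a) x_{k-1} + a x_k)`. On `D` the weight `a` lies in `[0, 1]`, so the
inner term is a convex combination of two neighbouring coordinates, and a convex combination of
`y ≤ z` is increasing in `y`, in `z` and in the weight.
-/

lemma one_sub_mul_add_mul_le_one_sub_mul_add_mul {a b y y' z z' : ℝ} (ha : 0 ≤ a) (hab : a ≤ b)
    (hb : b ≤ 1) (hy : y ≤ y') (hz : z ≤ z') (hyz : y ≤ z) :
    (1 - a) * y + a * z ≤ (1 - b) * y' + b * z' := by
  nlinarith [mul_nonneg (sub_nonneg.2 hab) (sub_nonneg.2 hyz),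
    mul_nonneg (sub_nonneg.2 hb) (sub_nonneg.2 hy), mul_nonneg (ha.trans hab) (sub_nonneg.2 hz)]

lemma one_sub_mul_add_mul_le_one {a y z : ℝ} (ha₀ : 0 ≤ a) (ha₁ : a ≤ 1) (hy : y ≤ 1)
    (hz : z ≤ 1) : (1 - a) * y + a * z ≤ 1 := by
  nlinarith [mul_le_mul_of_nonneg_left hy (sub_nonneg.2 ha₁), mul_le_mul_of_nonneg_left hz ha₀]

def grimPrev (x : ℕ → ℝ) (k : ℕ) : ℝ := if k = 0 then 0 else x (k - 1)

def grimWeight (K : ℕ) (ε : ℝ) (x : ℕ → ℝ) : ℝ := (1 - ε) * x (K - 1)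

lemma grimF_eq (K : ℕ) (γ ε : ℝ) (x : ℕ → ℝ) (k : ℕ) :
    grimF K γ ε x k = 1 - γ + γ * ((1 - grimWeight K ε x) * grimPrev x k
      + grimWeight K ε x * x k) := by
  unfold grimF grimPrev grimWeight
  split_ifs with hk
  · subst hk; ring
  · ring

section grimD

variable {K : ℕ} {x : ℕ → ℝ}

lemma grimD_apply_mono (hx : x ∈ grimD K) {j k : ℕ} (hjk : j ≤ k) (hk : k < K) : x j ≤ x k := by
  induction k, hjk using Nat.le_induction with
  | base => exact le_rfl
  | succ n _ ih => exact (ih (by omega)).trans (hx.2.1 n hk)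

lemma grimD_apply_nonneg (hx : x ∈ grimD K) {k : ℕ} (hk : k < K) : 0 ≤ x k :=
  hx.1.trans (grimD_apply_mono hx k.zero_le hk)

lemma grimD_apply_le_one (hx : x ∈ grimD K) {k : ℕ} (hk : k < K) : x k ≤ 1 :=
  (grimD_apply_mono hx (Nat.le_sub_one_of_lt hk) (by omega)).trans hx.2.2

lemma grimPrev_nonneg (hx : x ∈ grimD K) {k : ℕ} (hk : k < K) : 0 ≤ grimPrev x k := by
  unfold grimPrev
  split_ifs
  exacts [le_rfl, grimD_apply_nonneg hx (by omega)]

lemma grimPrev_le (hx : x ∈ grimD K) {k : ℕ} (hk : k < K) : grimPrev x k ≤ x k := by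
  unfold grimPrev
  split_ifs with hk0
  exacts [hk0 ▸ hx.1, grimD_apply_mono hx (Nat.sub_le k 1) hk]

lemma grimPrev_le_one (hx : x ∈ grimD K) {k : ℕ} (hk : k < K) : grimPrev x k ≤ 1 :=
  (grimPrev_le hx hk).trans (grimD_apply_le_one hx hk)

lemma grimPrev_le_grimPrev {xt : ℕ → ℝ} (hle : ∀ k < K, xt k ≤ x k) {k : ℕ} (hk : k < K) :
    grimPrev xt k ≤ grimPrev x k := by
  unfold grimPrev
  split_ifs
  exacts [le_rfl, hle _ (by omega)]

lemma grimWeight_nonneg {ε : ℝ} (hε : ε ≤ 1) (hK : 1 ≤ K) (hx : x ∈ grimD K) :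
    0 ≤ grimWeight K ε x :=
  mul_nonneg (sub_nonneg.2 hε) (grimD_apply_nonneg hx (by omega))

lemma grimWeight_le_one {ε : ℝ} (hε₀ : 0 ≤ ε) (hK : 1 ≤ K) (hx : x ∈ grimD K) :
    grimWeight K ε x ≤ 1 :=
  mul_le_one₀ (by linarith) (grimD_apply_nonneg hx (by omega)) hx.2.2

end grimD

section grimF

variable {K : ℕ} {γ ε : ℝ}

lemma grimF_le_grimF (hK : 1 ≤ K) (hγ : 0 ≤ γ) (hε₀ : 0 ≤ ε) (hε₁ : ε ≤ 1)
    {x xt : ℕ → ℝ} (hx : x ∈ grimD K) (hxt : xt ∈ grimD K) (hle : ∀ k < K, xt k ≤ x k)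
    {k : ℕ} (hk : k < K) : grimF K γ ε xt k ≤ grimF K γ ε x k := by
  rw [grimF_eq, grimF_eq]
  gcongr 1 - γ + γ * ?_
  exact one_sub_mul_add_mul_le_one_sub_mul_add_mul (grimWeight_nonneg hε₁ hK hxt)
    (mul_le_mul_of_nonneg_left (hle _ (by omega)) (by linarith)) (grimWeight_le_one hε₀ hK hx)
    (grimPrev_le_grimPrev hle hk) (hle k hk) (grimPrev_le hxt hk)

lemma grimF_mem_grimD (hK : 1 ≤ K) (hγ₀ : 0 ≤ γ) (hγ₁ : γ ≤ 1) (hε₀ : 0 ≤ ε) (hε₁ : ε ≤ 1)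
    {x : ℕ → ℝ} (hx : x ∈ grimD K) : grimF K γ ε x ∈ grimD K := by
  have ha₀ := grimWeight_nonneg hε₁ hK hx
  have ha₁ := grimWeight_le_one hε₀ hK hx
  refine ⟨?_, fun k hk => ?_, ?_⟩
  · rw [grimF_eq]
    have : 0 ≤ (1 - grimWeight K ε x) * grimPrev x 0 + grimWeight K ε x * x 0 :=
      add_nonneg (mul_nonneg (by linarith) (grimPrev_nonneg hx (by omega))) (mul_nonneg ha₀ hx.1)
    nlinarith
  · rw [grimF_eq, grimF_eq]
    gcongr 1 - γ + γ * ?_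
    refine one_sub_mul_add_mul_le_one_sub_mul_add_mul ha₀ le_rfl ha₁ ?_ (hx.2.1 k hk)
      (grimPrev_le hx (by omega))
    simpa [grimPrev] using grimPrev_le hx (k := k) (by omega)
  · rw [grimF_eq]
    have := one_sub_mul_add_mul_le_one ha₀ ha₁ (grimPrev_le_one hx (by omega : K - 1 < K)) hx.2.2
    nlinarith

end grimF

theorem stmt_15 (K : ℕ) (hK : 1 ≤ K) (γ ε : ℝ)
    (hγ : γ ∈ Set.Ioo (0:ℝ) 1) (hε : ε ∈ Set.Ioo (0:ℝ) 1) :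
    (∀ x ∈ grimD K, ∀ xt ∈ grimD K,
      (∀ k < K, xt k ≤ x k) → ∀ k < K, grimF K γ ε xt k ≤ grimF K γ ε x k) ∧
    (∀ x ∈ grimD K, grimF K γ ε x ∈ grimD K) := by
  obtain ⟨hγ₀, hγ₁⟩ := hγ
  obtain ⟨hε₀, hε₁⟩ := hε
  exact ⟨fun x hx xt hxt hle _ hk => grimF_le_grimF hK hγ₀.le hε₀.le hε₁.le hx hxt hle hk,
    fun x hx => grimF_mem_grimD hK hγ₀.le hγ₁.le hε₀.le hε₁.le hx⟩
end

section
/- Fix an integer K ≥ 1 and γ, ε ∈ (0,1), and let F and D be as defined. Suppose x̄ ∈ D is a fixed point of F such that every fixed point y ∈ D of F satisfies y_k ≤ x̄_k for all k < K. Then for every x⁰ ∈ D with x̄_k ≤ x⁰_k for all k < K, the iterates x^{t+1} = F(x^t) converge to x̄ as t → ∞. (That is, if the initial record distribution dominates the most cooperative steady state, the record distribution converges to the most cooperative steady state.) -/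
/-!
With `c = (1 - ε) x_{K-1} ∈ [0, 1]`, every coordinate of the update is
`F(x)_k = 1 - γ + γ ((1 - c) x_{k-1} + c x_k)` (with `x_{-1} = 0`), a convex combination of
neighbouring coordinates; hence `F` maps `D` into itself and is monotone for the componentwise
order. The iterates of the top point `1` therefore decrease; their limit lies in `D` (a closed set)
and is a fixed point of the continuous map `F` dominating `x̄`, so it equals `x̄` by maximality.
Monotonicity squeezes the iterates from `x⁰`: `x̄ ≤ Fᵗ x⁰ ≤ Fᵗ 1`.
-/

open Set Filter Topology

def LeOn (K : ℕ) (x y : ℕ → ℝ) : Prop := ∀ k < K, x k ≤ y k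

section Iterate

variable {K : ℕ} {D : Set (ℕ → ℝ)} {f : (ℕ → ℝ) → ℕ → ℝ}

theorem iterate_leOn_iterate (hD : MapsTo f D D)
    (hf : ∀ x ∈ D, ∀ y ∈ D, LeOn K x y → LeOn K (f x) (f y))
    {x y : ℕ → ℝ} (hx : x ∈ D) (hy : y ∈ D) (hxy : LeOn K x y) (t : ℕ) :
    LeOn K (f^[t] x) (f^[t] y) := by
  induction t with
  | zero => exact hxy
  | succ t ih =>
    rw [Function.iterate_succ_apply', Function.iterate_succ_apply']
    exact hf _ (hD.iterate t hx) _ (hD.iterate t hy) ih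

theorem leOn_iterate_of_leOn_apply (hD : MapsTo f D D)
    (hf : ∀ x ∈ D, ∀ y ∈ D, LeOn K x y → LeOn K (f x) (f y))
    {x y : ℕ → ℝ} (hx : x ∈ D) (hxf : LeOn K x (f x)) (hy : y ∈ D) (hxy : LeOn K x y)
    (t : ℕ) : LeOn K x (f^[t] y) := by
  induction t with
  | zero => exact hxy
  | succ t ih =>
    rw [Function.iterate_succ_apply']
    exact fun k hk => (hxf k hk).trans (hf _ hx _ (hD.iterate t hy) ih k hk)

theorem iterate_succ_leOn_of_apply_leOn (hD : MapsTo f D D)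
    (hf : ∀ x ∈ D, ∀ y ∈ D, LeOn K x y → LeOn K (f x) (f y))
    {x : ℕ → ℝ} (hx : x ∈ D) (hfx : LeOn K (f x) x) (t : ℕ) :
    LeOn K (f^[t + 1] x) (f^[t] x) := by
  rw [Function.iterate_succ_apply]
  exact iterate_leOn_iterate hD hf (hD hx) hx hfx t

end Iterate

section Grim

variable {K : ℕ} {γ ε : ℝ} {x y : ℕ → ℝ}

theorem grimF_zero (x : ℕ → ℝ) :
    grimF K γ ε x 0 = 1 - γ + γ * ((1 - ε) * x (K - 1) * x 0) := by
  simp only [grimF, ↓reduceIte]; ring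

theorem grimF_succ (x : ℕ → ℝ) (k : ℕ) :
    grimF K γ ε x (k + 1) = 1 - γ + γ * ((1 - (1 - ε) * x (K - 1)) * x k
      + (1 - ε) * x (K - 1) * x (k + 1)) := by
  simp only [grimF, Nat.add_one_ne_zero, if_false, Nat.add_sub_cancel]; ring

theorem grimD_mono (hx : x ∈ grimD K) {j k : ℕ} (hjk : j ≤ k) (hk : k ≤ K - 1) : x j ≤ x k := by
  induction k, hjk using Nat.le_induction with
  | base => rfl
  | succ k _ ih => exact (ih (by omega)).trans (hx.2.1 k (by omega))

theorem grimD_nonneg (hx : x ∈ grimD K) {k : ℕ} (hk : k ≤ K - 1) : 0 ≤ x k :=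
  hx.1.trans (grimD_mono hx k.zero_le hk)

theorem grimD_le_one (hx : x ∈ grimD K) {k : ℕ} (hk : k ≤ K - 1) : x k ≤ 1 :=
  (grimD_mono hx hk le_rfl).trans hx.2.2

theorem one_mem_grimD : (1 : ℕ → ℝ) ∈ grimD K :=
  ⟨zero_le_one, fun _ _ => le_rfl, le_rfl⟩

theorem leOn_one_of_mem_grimD (hx : x ∈ grimD K) : LeOn K x 1 :=
  fun _ hk => grimD_le_one hx (Nat.le_sub_one_of_lt hk)

theorem convexComb_le_convexComb {a a' b b' c c' : ℝ} (hc : 0 ≤ c) (hcc' : c ≤ c')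
    (hc' : c' ≤ 1) (ha : a ≤ a') (hb : b ≤ b') (hab' : a' ≤ b') :
    (1 - c) * a + c * b ≤ (1 - c') * a' + c' * b' :=
  calc (1 - c) * a + c * b ≤ (1 - c) * a' + c * b' := by
        gcongr
        linarith
    _ ≤ (1 - c') * a' + c' * b' := by
        nlinarith [mul_nonneg (sub_nonneg.2 hcc') (sub_nonneg.2 hab')]

theorem grimD_weight_mem_Icc (hε : ε ∈ Icc 0 1) (hx : x ∈ grimD K) :
    (1 - ε) * x (K - 1) ∈ Icc 0 1 :=
  ⟨mul_nonneg (sub_nonneg.2 hε.2) (grimD_nonneg hx le_rfl),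
    mul_le_one₀ (by linarith [hε.1]) (grimD_nonneg hx le_rfl) (grimD_le_one hx le_rfl)⟩

theorem grimF_monotoneOn (hγ : 0 ≤ γ) (hε : ε ∈ Icc 0 1) :
    ∀ x ∈ grimD K, ∀ y ∈ grimD K, LeOn K x y → LeOn K (grimF K γ ε x) (grimF K γ ε y) := by
  intro x hx y hy hxy k hk
  have hcx := grimD_weight_mem_Icc hε hx
  have hcy := grimD_weight_mem_Icc hε hy
  have hcxy : (1 - ε) * x (K - 1) ≤ (1 - ε) * y (K - 1) :=
    mul_le_mul_of_nonneg_left (hxy _ (by omega)) (sub_nonneg.2 hε.2)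
  cases k with
  | zero =>
    rw [grimF_zero, grimF_zero]
    gcongr 1 - γ + γ * ?_
    exact mul_le_mul hcxy (hxy 0 hk) hx.1 hcy.1
  | succ k =>
    rw [grimF_succ, grimF_succ]
    gcongr 1 - γ + γ * ?_
    exact convexComb_le_convexComb hcx.1 hcxy hcy.2 (hxy k (by omega)) (hxy (k + 1) hk)
      (hy.2.1 k hk)

theorem grimF_le_sub_add_mul (hγ : 0 ≤ γ) (hε : ε ∈ Icc 0 1) (hx : x ∈ grimD K) {k : ℕ}
    (hk : k ≤ K - 1) : grimF K γ ε x k ≤ 1 - γ + γ * x k := by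
  obtain ⟨hc0, hc1⟩ := grimD_weight_mem_Icc hε hx
  cases k with
  | zero =>
    rw [grimF_zero]
    gcongr 1 - γ + γ * ?_
    exact mul_le_of_le_one_left hx.1 hc1
  | succ k =>
    rw [grimF_succ]
    gcongr 1 - γ + γ * ?_
    nlinarith [mul_le_mul_of_nonneg_left (hx.2.1 k (by omega)) (sub_nonneg.2 hc1)]

theorem grimF_mapsTo (hγ : γ ∈ Icc 0 1) (hε : ε ∈ Icc 0 1) :
    MapsTo (grimF K γ ε) (grimD K) (grimD K) := by
  intro x hx
  obtain ⟨hγ0, hγ1⟩ := hγ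
  obtain ⟨hc0, hc1⟩ := grimD_weight_mem_Icc hε hx
  refine ⟨?_, fun k hk => ?_, ?_⟩
  · rw [grimF_zero]
    exact add_nonneg (sub_nonneg.2 hγ1) (mul_nonneg hγ0 (mul_nonneg hc0 hx.1))
  · cases k with
    | zero =>
      rw [grimF_zero, grimF_succ]
      gcongr 1 - γ + γ * ?_
      nlinarith [mul_nonneg (sub_nonneg.2 hc1) hx.1, mul_le_mul_of_nonneg_left (hx.2.1 0 hk) hc0]
    | succ k =>
      rw [grimF_succ, grimF_succ]
      gcongr 1 - γ + γ * ?_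
      exact convexComb_le_convexComb hc0 le_rfl hc1 (hx.2.1 k (by omega)) (hx.2.1 (k + 1) hk)
        (hx.2.1 (k + 1) hk)
  · have := grimF_le_sub_add_mul hγ0 hε hx (le_refl (K - 1))
    nlinarith [grimD_le_one hx (le_refl (K - 1))]

theorem tendsto_grimF {ι : Type*} {l : Filter ι} {s : ι → ℕ → ℝ} {L : ℕ → ℝ}
    (hs : ∀ k < K, Tendsto (fun i => s i k) l (𝓝 (L k))) {k : ℕ} (hk : k < K) :
    Tendsto (fun i => grimF K γ ε (s i) k) l (𝓝 (grimF K γ ε L k)) := by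
  have hlast := hs (K - 1) (by omega)
  cases k with
  | zero =>
    simp only [grimF_zero]
    exact tendsto_const_nhds.add (tendsto_const_nhds.mul
      ((tendsto_const_nhds.mul hlast).mul (hs 0 hk)))
  | succ k =>
    simp only [grimF_succ]
    exact tendsto_const_nhds.add (tendsto_const_nhds.mul
      (((tendsto_const_nhds.sub (tendsto_const_nhds.mul hlast)).mul (hs k (by omega))).add
        ((tendsto_const_nhds.mul hlast).mul (hs (k + 1) hk))))

theorem mem_grimD_of_tendsto {ι : Type*} {l : Filter ι} [l.NeBot] {s : ι → ℕ → ℝ}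
    {L : ℕ → ℝ} (hK : 0 < K) (hsD : ∀ i, s i ∈ grimD K)
    (hs : ∀ k < K, Tendsto (fun i => s i k) l (𝓝 (L k))) : L ∈ grimD K :=
  ⟨ge_of_tendsto' (hs 0 hK) fun i => (hsD i).1,
    fun k hk => le_of_tendsto_of_tendsto' (hs k (by omega)) (hs (k + 1) hk)
      fun i => (hsD i).2.1 k hk,
    le_of_tendsto' (hs (K - 1) (by omega)) fun i => (hsD i).2.2⟩

theorem tendsto_grimF_iterate_one (hγ : γ ∈ Icc 0 1) (hε : ε ∈ Icc 0 1)
    {xbar : ℕ → ℝ} (hxbar : xbar ∈ grimD K) (hpost : LeOn K xbar (grimF K γ ε xbar))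
    (hmax : ∀ y ∈ grimD K, (∀ k < K, grimF K γ ε y k = y k) → LeOn K y xbar)
    {k : ℕ} (hk : k < K) :
    Tendsto (fun t => (grimF K γ ε)^[t] 1 k) atTop (𝓝 (xbar k)) := by
  set F := grimF K γ ε
  have hD : MapsTo F (grimD K) (grimD K) := grimF_mapsTo hγ hε
  have hF := grimF_monotoneOn (K := K) hγ.1 hε
  have hbelow : ∀ t, LeOn K xbar (F^[t] 1) :=
    leOn_iterate_of_leOn_apply hD hF hxbar hpost one_mem_grimD (leOn_one_of_mem_grimD hxbar)
  have hanti : ∀ t, LeOn K (F^[t + 1] 1) (F^[t] 1) :=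
    iterate_succ_leOn_of_apply_leOn hD hF one_mem_grimD
      (leOn_one_of_mem_grimD (hD one_mem_grimD))
  set L : ℕ → ℝ := fun j => ⨅ t, F^[t] 1 j
  have hL : ∀ j < K, Tendsto (fun t => F^[t] 1 j) atTop (𝓝 (L j)) := fun j hj =>
    tendsto_atTop_ciInf (antitone_nat_of_succ_le fun t => hanti t j hj)
      ⟨xbar j, forall_mem_range.2 fun t => hbelow t j hj⟩
  have hLD : L ∈ grimD K :=
    mem_grimD_of_tendsto (by omega) (fun t => hD.iterate t one_mem_grimD) hL
  have hLfix : ∀ j < K, F L j = L j := fun j hj =>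
    tendsto_nhds_unique (tendsto_grimF hL hj) <| by
      simpa only [Function.comp_def, Function.iterate_succ_apply'] using
        (hL j hj).comp (tendsto_add_atTop_nat 1)
  have hLx : L k = xbar k :=
    le_antisymm (hmax L hLD hLfix k hk) (le_ciInf fun t => hbelow t k hk)
  exact hLx ▸ hL k hk

end Grim

theorem stmt_16_general (K : ℕ) (γ ε : ℝ)
    (hγ : γ ∈ Set.Ioo (0:ℝ) 1) (hε : ε ∈ Set.Ioo (0:ℝ) 1)
    (xbar : ℕ → ℝ) (hxbar : xbar ∈ grimD K)
    (hfix : ∀ k < K, grimF K γ ε xbar k = xbar k)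
    (hmax : ∀ y ∈ grimD K, (∀ k < K, grimF K γ ε y k = y k) → ∀ k < K, y k ≤ xbar k)
    (x0 : ℕ → ℝ) (hx0 : x0 ∈ grimD K) (hdom : ∀ k < K, xbar k ≤ x0 k)
    (seq : ℕ → ℕ → ℝ) (hseq0 : seq 0 = x0)
    (hseq : ∀ t, seq (t + 1) = grimF K γ ε (seq t)) :
    ∀ k < K, Filter.Tendsto (fun t => seq t k) Filter.atTop (nhds (xbar k)) := by
  have hγ' := Ioo_subset_Icc_self hγ
  have hε' := Ioo_subset_Icc_self hε
  have hD : MapsTo (grimF K γ ε) (grimD K) (grimD K) := grimF_mapsTo hγ' hε'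
  have hF := grimF_monotoneOn (K := K) hγ'.1 hε'
  have hpost : LeOn K xbar (grimF K γ ε xbar) := fun k hk => (hfix k hk).ge
  have hseq_eq : ∀ t, seq t = (grimF K γ ε)^[t] x0 := by
    intro t
    induction t with
    | zero => exact hseq0
    | succ t ih => rw [hseq, ih, Function.iterate_succ_apply']
  intro k hk
  refine tendsto_of_tendsto_of_tendsto_of_le_of_le tendsto_const_nhds
    (tendsto_grimF_iterate_one hγ' hε' hxbar hpost hmax hk) (fun t => ?_) (fun t => ?_)
  · rw [hseq_eq]
    exact leOn_iterate_of_leOn_apply hD hF hxbar hpost hx0 hdom t k hk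
  · rw [hseq_eq]
    exact iterate_leOn_iterate hD hF hx0 one_mem_grimD (leOn_one_of_mem_grimD hx0) t k hk

theorem stmt_16 (K : ℕ) (hK : 1 ≤ K) (γ ε : ℝ)
    (hγ : γ ∈ Set.Ioo (0:ℝ) 1) (hε : ε ∈ Set.Ioo (0:ℝ) 1)
    (xbar : ℕ → ℝ) (hxbar : xbar ∈ grimD K)
    (hfix : ∀ k < K, grimF K γ ε xbar k = xbar k)
    (hmax : ∀ y ∈ grimD K, (∀ k < K, grimF K γ ε y k = y k) → ∀ k < K, y k ≤ xbar k)
    (x0 : ℕ → ℝ) (hx0 : x0 ∈ grimD K) (hdom : ∀ k < K, xbar k ≤ x0 k)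
    (seq : ℕ → ℕ → ℝ) (hseq0 : seq 0 = x0)
    (hseq : ∀ t, seq (t + 1) = grimF K γ ε (seq t)) :
    ∀ k < K, Filter.Tendsto (fun t => seq t k) Filter.atTop (nhds (xbar k)) :=
  stmt_16_general K γ ε hγ hε xbar hxbar hfix hmax x0 hx0 hdom seq hseq0 hseq
end

section
/- Let n ≥ 2 be an integer, let F > 0 and l > 0 be reals, and let g ∈ ℝ. Suppose μ ∈ (0,1) satisfies (μ^{n-1}·(1-μ)/(1-μ^{n-1}))·F ≥ g and μ^{n-1} ≤ l/(F+l). Then g ≤ (1 - (l/(F+l))^{1/(n-1)})·l. (This is the necessary condition on the parameters for any positive cooperation to be sustainable with generalized GrimK strategies in the n-player public goods game in the limit of long lifespans and vanishing noise.) -/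
/-!
Write `m = n - 1` and `φ(x) = x^m (1 - x) / (1 - x^m) = x^m / (1 + x + ⋯ + x^{m-1})`. This ratio is
increasing on `[0, 1)`, since termwise `a^m b^i ≤ b^m a^i` for `a ≤ b` and `i ≤ m`. The second
hypothesis says `μ ≤ x₀ := (l / (F + l))^{1/m}`, so `g ≤ φ(μ) F ≤ φ(x₀) F`, and at `x₀` we have
`x₀^m / (1 - x₀^m) = l / F`, whence `φ(x₀) F = (1 - x₀) l`.
-/

open Finset

section GeomRatio

variable {α : Type*} [Field α]

def geomRatio (m : ℕ) (x : α) : α := x ^ m * (1 - x) / (1 - x ^ m)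

lemma geomRatio_eq_pow_div_geom_sum (m : ℕ) {x : α} (hx : x ≠ 1) :
    geomRatio m x = x ^ m / ∑ i ∈ range m, x ^ i := by
  rw [geomRatio, ← mul_neg_geom_sum, mul_comm (1 - x), mul_div_mul_right _ _ (sub_ne_zero.2 hx.symm)]

variable [LinearOrder α] [IsStrictOrderedRing α]

lemma pow_mul_pow_le_pow_mul_pow {a b : α} (ha : 0 ≤ a) (hab : a ≤ b) {i m : ℕ} (him : i ≤ m) :
    a ^ m * b ^ i ≤ b ^ m * a ^ i := by
  obtain ⟨k, rfl⟩ := Nat.exists_eq_add_of_le him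
  calc a ^ (i + k) * b ^ i = a ^ i * b ^ i * a ^ k := by ring
    _ ≤ a ^ i * b ^ i * b ^ k := by have := ha.trans hab; gcongr
    _ = b ^ (i + k) * a ^ i := by ring

lemma monotoneOn_geomRatio {m : ℕ} (hm : m ≠ 0) : MonotoneOn (geomRatio (α := α) m) (Set.Ico 0 1) := by
  rintro a ⟨ha0, ha1⟩ b ⟨hb0, hb1⟩ hab
  rw [geomRatio_eq_pow_div_geom_sum m ha1.ne, geomRatio_eq_pow_div_geom_sum m hb1.ne,
    div_le_div_iff₀ (geom_sum_pos ha0 hm) (geom_sum_pos hb0 hm),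
    mul_sum, mul_sum]
  exact sum_le_sum fun i hi => pow_mul_pow_le_pow_mul_pow ha0 hab (mem_range.1 hi).le

end GeomRatio

lemma geomRatio_mul_eq_of_pow_eq {F l x : ℝ} {m : ℕ} (hF : 0 < F) (hl : 0 < l)
    (hx : x ^ m = l / (F + l)) : geomRatio m x * F = (1 - x) * l := by
  have hFl : 0 < F + l := by linarith
  have hden : 1 - x ^ m = F / (F + l) := by rw [hx]; field_simp; ring
  rw [geomRatio, hden, hx]
  field_simp

theorem stmt_19 (n : ℕ) (hn : 2 ≤ n) (F l g : ℝ) (hF : 0 < F) (hl : 0 < l)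
    (μ : ℝ) (hμ : μ ∈ Set.Ioo (0:ℝ) 1)
    (hICC : (μ ^ (n - 1) * (1 - μ) / (1 - μ ^ (n - 1))) * F ≥ g)
    (hICD : μ ^ (n - 1) ≤ l / (F + l)) :
    g ≤ (1 - (l / (F + l)) ^ ((1:ℝ) / (n - 1))) * l := by
  set r := l / (F + l)
  have hm : n - 1 ≠ 0 := by omega
  have hr0 : 0 < r := by positivity
  have hr1 : r < 1 := (div_lt_one (by linarith)).2 (by linarith)
  have hexp : (1:ℝ) / (n - 1) = ((n - 1 : ℕ) : ℝ)⁻¹ := by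
    rw [one_div, Nat.cast_pred (by omega)]
  set x₀ := r ^ ((1:ℝ) / (n - 1))
  have hx₀0 : 0 ≤ x₀ := by positivity
  have hx₀1 : x₀ < 1 := Real.rpow_lt_one hr0.le hr1 (by rw [hexp]; positivity)
  have hx₀pow : x₀ ^ (n - 1) = r := by
    simp only [x₀, hexp]; exact Real.rpow_inv_natCast_pow hr0.le hm
  have hμx₀ : μ ≤ x₀ := (pow_le_pow_iff_left₀ hμ.1.le hx₀0 hm).1 (hx₀pow ▸ hICD)
  calc g ≤ geomRatio (n - 1) μ * F := hICC
    _ ≤ geomRatio (n - 1) x₀ * F := by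
      gcongr
      exact monotoneOn_geomRatio hm ⟨hμ.1.le, hμ.2⟩ ⟨hx₀0, hx₀1⟩ hμx₀
    _ = (1 - x₀) * l := geomRatio_mul_eq_of_pow_eq hF hl hx₀pow
end
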